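/- arXiv:2002.11444 — 2 statements merged into one kernel-verified Lean document; each statement's English description precedes it below -/
import Mathlib

section
/- Let f be a time-varying vector field on E = EuclideanSpace ℝ (Fin n) with f(·,t) C¹ for each t and f(0,t) = 0 for all t. Suppose V : ℝ × E × E → ℝ satisfies c₁‖y‖^p ≤ V(t,x,y) ≤ c₂‖y‖^p for constants c₁,c₂ > 0, p ≥ 1, and along every lifted solution (x(·),y(·)) of the complete lift of f the function t ↦ V(t,x(t),y(t)) is differentiable with derivative at most −k V(t,x(t),y(t)) for some k > 0. Let h : E → E be a C¹ vector field with (D_x f(x,t))(h(x)) = (Dh(x))(f(x,t)) for all x,t, and suppose k₁‖x‖^q ≤ ‖h(x)‖ ≤ k₂‖x‖^q for constants k₁,k₂ > 0 and q ≥ 1. Define W(t,x) = V(t,x,h(x)). Then c₁k₁^p ‖x‖^{pq} ≤ W(t,x) ≤ c₂k₂^p ‖x‖^{pq} for all t,x, and along every solution x(·) of ẋ = f(x,t) starting at any (t₀,x₀), the function t ↦ W(t,x(t)) is differentiable with derivative at most −k W(t,x(t)) for all t ≥ t₀; consequently W(t,x(t)) ≤ e^{−k(t−t₀)} W(t₀,x₀).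 -/
noncomputable section

/-- The Euclidean state space. -/
abbrev E (n : ℕ) := EuclideanSpace ℝ (Fin n)

/-- `x` is a solution of `ẋ = f(x,t)` starting at `(t₀, x₀)`. -/
def IsSolution {n : ℕ} (f : E n → ℝ → E n) (t₀ : ℝ) (x₀ : E n) (x : ℝ → E n) : Prop :=
  x t₀ = x₀ ∧ ∀ t, t₀ ≤ t → HasDerivAt x (f (x t) t) t

/-- `(x, y)` is a lifted solution of the complete lift of `f`, starting at `(t₀, x₀, y₀)`:
`ẋ = f(x,t)`, `ẏ = (D_x f(x,t)) y`. -/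
def IsLiftedSolution {n : ℕ} (f : E n → ℝ → E n) (t₀ : ℝ) (x₀ y₀ : E n)
    (x y : ℝ → E n) : Prop :=
  IsSolution f t₀ x₀ x ∧ y t₀ = y₀ ∧
    ∀ t, t₀ ≤ t → HasDerivAt y (fderiv ℝ (fun z => f z t) (x t) (y t)) t

/-! Because `[f, h] = 0`, the curve `y = h ∘ x` solves the variational equation
`ẏ = D_x f(x, t) y` along every solution `x`: indeed `ẏ = Dh(x) f(x, t) = D_x f(x, t) h(x)`.
So `(x, h ∘ x)` is a lifted solution and `W(t, x(t)) = V(t, x(t), h(x(t)))` inherits the decay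
`V̇ ≤ -k V`, which Grönwall's inequality turns into exponential decay. The bounds on `W` are those
of `V` composed with those of `h`. -/

theorem le_exp_mul_of_hasDerivAt_le_neg_mul {g : ℝ → ℝ} {k t₀ : ℝ}
    (hg : ∀ t, t₀ ≤ t → ∃ d, HasDerivAt g d t ∧ d ≤ -k * g t) :
    ∀ t, t₀ ≤ t → g t ≤ Real.exp (-k * (t - t₀)) * g t₀ := by
  intro t ht
  have hderiv : ∀ s ∈ Set.Icc t₀ t, HasDerivAt g (deriv g s) s := fun s hs => by
    obtain ⟨d, hd, -⟩ := hg s hs.1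
    rwa [hd.deriv]
  have hgronwall := le_gronwallBound_of_liminf_deriv_right_le (f := g) (f' := deriv g)
    (δ := g t₀) (K := -k) (ε := 0)
    (fun s hs => (hderiv s hs).continuousAt.continuousWithinAt)
    (fun s hs r hr => by
      simpa only [slope, smul_eq_mul, vsub_eq_sub] using
        (hderiv s (Set.Ico_subset_Icc_self hs)).hasDerivWithinAt.liminf_right_slope_le hr)
    le_rfl
    (fun s hs => by
      obtain ⟨d, hd, hdle⟩ := hg s hs.1
      rwa [hd.deriv, add_zero])
    t ⟨ht, le_rfl⟩
  rwa [gronwallBound_ε0, mul_comm] at hgronwall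

theorem mul_rpow_rpow {c a : ℝ} (hc : 0 ≤ c) (ha : 0 ≤ a) (p q : ℝ) :
    (c * a ^ q) ^ p = c ^ p * a ^ (p * q) := by
  rw [Real.mul_rpow hc (Real.rpow_nonneg ha q), ← Real.rpow_mul ha, mul_comm p q]

section Sandwich

variable {X Y : Type*} [NormedAddCommGroup X] [NormedAddCommGroup Y]
  {V : ℝ → X → Y → ℝ} {h : X → Y} {c p k q : ℝ}

theorem mul_rpow_mul_norm_rpow_le_comp (hc : 0 ≤ c) (hp : 0 ≤ p) (hk : 0 ≤ k)
    (hVlow : ∀ t x y, c * ‖y‖ ^ p ≤ V t x y) (hhlow : ∀ x, k * ‖x‖ ^ q ≤ ‖h x‖) (t : ℝ) (x : X) :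
    c * k ^ p * ‖x‖ ^ (p * q) ≤ V t x (h x) :=
  calc c * k ^ p * ‖x‖ ^ (p * q) = c * (k * ‖x‖ ^ q) ^ p := by
        rw [mul_rpow_rpow hk (norm_nonneg x), mul_assoc]
    _ ≤ c * ‖h x‖ ^ p := by gcongr; exact hhlow x
    _ ≤ V t x (h x) := hVlow t x (h x)

theorem comp_le_mul_rpow_mul_norm_rpow (hc : 0 ≤ c) (hp : 0 ≤ p) (hk : 0 ≤ k)
    (hVup : ∀ t x y, V t x y ≤ c * ‖y‖ ^ p) (hhup : ∀ x, ‖h x‖ ≤ k * ‖x‖ ^ q) (t : ℝ) (x : X) :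
    V t x (h x) ≤ c * k ^ p * ‖x‖ ^ (p * q) :=
  calc V t x (h x) ≤ c * ‖h x‖ ^ p := hVup t x (h x)
    _ ≤ c * (k * ‖x‖ ^ q) ^ p := by gcongr; exact hhup x
    _ = c * k ^ p * ‖x‖ ^ (p * q) := by rw [mul_rpow_rpow hk (norm_nonneg x), mul_assoc]

end Sandwich

theorem IsSolution.isLiftedSolution_comp {n : ℕ} {f : E n → ℝ → E n} {t₀ : ℝ} {x₀ : E n}
    {x : ℝ → E n} (hx : IsSolution f t₀ x₀ x) {h : E n → E n} (hh : Differentiable ℝ h)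
    (hbracket : ∀ (x : E n) (t : ℝ),
      fderiv ℝ (fun z => f z t) x (h x) = fderiv ℝ h x (f x t)) :
    IsLiftedSolution f t₀ x₀ (h x₀) x (fun s => h (x s)) := by
  refine ⟨hx, congrArg h hx.1, fun t ht => ?_⟩
  rw [hbracket]
  exact (hh (x t)).hasFDerivAt.comp_hasDerivAt t (hx.2 t ht)

theorem krasovskii_extension_general {n : ℕ} (f : E n → ℝ → E n)
    (V : ℝ → E n → E n → ℝ) (c₁ c₂ p k : ℝ)
    (hc₁ : 0 < c₁) (hc₂ : 0 < c₂) (hp : 1 ≤ p)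
    (hVlow : ∀ t x y, c₁ * ‖y‖ ^ p ≤ V t x y)
    (hVup : ∀ t x y, V t x y ≤ c₂ * ‖y‖ ^ p)
    (hVdec : ∀ (t₀ : ℝ) (x₀ y₀ : E n) (x y : ℝ → E n),
      IsLiftedSolution f t₀ x₀ y₀ x y →
      ∀ t, t₀ ≤ t → ∃ d : ℝ,
        HasDerivAt (fun s => V s (x s) (y s)) d t ∧ d ≤ -k * V t (x t) (y t))
    (h : E n → E n) (hh : ContDiff ℝ 1 h)
    (hbracket : ∀ (x : E n) (t : ℝ),
      fderiv ℝ (fun z => f z t) x (h x) = fderiv ℝ h x (f x t))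
    (k₁ k₂ q : ℝ) (hk₁ : 0 < k₁) (hk₂ : 0 < k₂)
    (hhlow : ∀ x : E n, k₁ * ‖x‖ ^ q ≤ ‖h x‖)
    (hhup : ∀ x : E n, ‖h x‖ ≤ k₂ * ‖x‖ ^ q)
    (W : ℝ → E n → ℝ) (hW : ∀ t x, W t x = V t x (h x)) :
    (∀ (t : ℝ) (x : E n),
      c₁ * k₁ ^ p * ‖x‖ ^ (p * q) ≤ W t x ∧ W t x ≤ c₂ * k₂ ^ p * ‖x‖ ^ (p * q)) ∧
    (∀ (t₀ : ℝ) (x₀ : E n) (x : ℝ → E n), IsSolution f t₀ x₀ x →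
      (∀ t, t₀ ≤ t → ∃ d : ℝ,
        HasDerivAt (fun s => W s (x s)) d t ∧ d ≤ -k * W t (x t)) ∧
      (∀ t, t₀ ≤ t → W t (x t) ≤ Real.exp (-k * (t - t₀)) * W t₀ x₀)) := by
  have hp₀ : (0 : ℝ) ≤ p := zero_le_one.trans hp
  obtain rfl : W = fun t x => V t x (h x) := funext₂ hW
  refine ⟨fun t x => ⟨mul_rpow_mul_norm_rpow_le_comp hc₁.le hp₀ hk₁.le hVlow hhlow t x,
    comp_le_mul_rpow_mul_norm_rpow hc₂.le hp₀ hk₂.le hVup hhup t x⟩, fun t₀ x₀ x hx => ?_⟩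
  have hdecay := hVdec t₀ x₀ (h x₀) x _
    (hx.isLiftedSolution_comp (hh.differentiable one_ne_zero) hbracket)
  refine ⟨hdecay, fun t ht => ?_⟩
  simpa only [hx.1] using le_exp_mul_of_hasDerivAt_le_neg_mul hdecay t ht

/-- Krasovskii-type construction: if `V` is a Finsler–Lyapunov function decaying at rate
`k` along lifted solutions and `h` is a commuting vector field (`[f,h] = 0`) with
`k₁‖x‖^q ≤ ‖h(x)‖ ≤ k₂‖x‖^q`, then `W(t,x) = V(t,x,h(x))` is a Lyapunov function:
`c₁k₁^p ‖x‖^{pq} ≤ W(t,x) ≤ c₂k₂^p ‖x‖^{pq}`, `Ẇ ≤ −kW` along solutions, and hence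
`W(t,x(t)) ≤ e^{−k(t−t₀)} W(t₀,x₀)`. -/
theorem krasovskii_extension {n : ℕ} (f : E n → ℝ → E n)
    (hf : ∀ t, ContDiff ℝ 1 (fun z => f z t))
    (hf0 : ∀ t, f 0 t = 0)
    (V : ℝ → E n → E n → ℝ) (c₁ c₂ p k : ℝ)
    (hc₁ : 0 < c₁) (hc₂ : 0 < c₂) (hp : 1 ≤ p) (hk : 0 < k)
    (hVlow : ∀ t x y, c₁ * ‖y‖ ^ p ≤ V t x y)
    (hVup : ∀ t x y, V t x y ≤ c₂ * ‖y‖ ^ p)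
    (hVdec : ∀ (t₀ : ℝ) (x₀ y₀ : E n) (x y : ℝ → E n),
      IsLiftedSolution f t₀ x₀ y₀ x y →
      ∀ t, t₀ ≤ t → ∃ d : ℝ,
        HasDerivAt (fun s => V s (x s) (y s)) d t ∧ d ≤ -k * V t (x t) (y t))
    (h : E n → E n) (hh : ContDiff ℝ 1 h)
    (hbracket : ∀ (x : E n) (t : ℝ),
      fderiv ℝ (fun z => f z t) x (h x) = fderiv ℝ h x (f x t))
    (k₁ k₂ q : ℝ) (hk₁ : 0 < k₁) (hk₂ : 0 < k₂) (hq : 1 ≤ q)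
    (hhlow : ∀ x : E n, k₁ * ‖x‖ ^ q ≤ ‖h x‖)
    (hhup : ∀ x : E n, ‖h x‖ ≤ k₂ * ‖x‖ ^ q)
    (W : ℝ → E n → ℝ) (hW : ∀ t x, W t x = V t x (h x)) :
    (∀ (t : ℝ) (x : E n),
      c₁ * k₁ ^ p * ‖x‖ ^ (p * q) ≤ W t x ∧ W t x ≤ c₂ * k₂ ^ p * ‖x‖ ^ (p * q)) ∧
    (∀ (t₀ : ℝ) (x₀ : E n) (x : ℝ → E n), IsSolution f t₀ x₀ x →
      (∀ t, t₀ ≤ t → ∃ d : ℝ,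
        HasDerivAt (fun s => W s (x s)) d t ∧ d ≤ -k * W t (x t)) ∧
      (∀ t, t₀ ≤ t → W t (x t) ≤ Real.exp (-k * (t - t₀)) * W t₀ x₀)) :=
  krasovskii_extension_general f V c₁ c₂ p k hc₁ hc₂ hp hVlow hVup hVdec h hh hbracket k₁ k₂ q hk₁
    hk₂ hhlow hhup W hW
end
end

section
/- Let f be a time-varying vector field on E = EuclideanSpace ℝ (Fin n) with f(·,t) globally Lipschitz with constant L > 0 for every t, and let φ be a flow for f that is differentiable in the initial state with derivative Dφ(t;t₀,x) whose directional curves are lifted solutions of the complete lift of f, satisfies the cocycle identity Dφ(τ;s,φ(s;t,x)) ∘ Dφ(s;t,x) = Dφ(τ;t,x) for τ ≥ s ≥ t, and is such that τ ↦ ‖Dφ(τ;t,x)y‖ is continuous. Assume the system is uniformly globally incrementally exponentially stable: ‖φ(t;t₀,x₁) − φ(t;t₀,x₂)‖ ≤ K e^{−λ(t−t₀)} ‖x₁ − x₂‖ for all x₁,x₂ and t ≥ t₀, with K ≥ 1, λ > 0. Then for every p ≥ 1 there exist constants c₁, c₂, k > 0 and a function V : ℝ × E × E → ℝ such that c₁‖y‖^p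 ≤ V(t,x,y) ≤ c₂‖y‖^p for all t,x,y, and along every lifted solution (x(·),y(·)) of the complete lift of f starting at time t₀ given by x(t) = φ(t;t₀,x₀), y(t) = Dφ(t;t₀,x₀)y₀, the function t ↦ V(t,x(t),y(t)) has right derivative at t₀ at most −k V(t₀,x₀,y₀). -/
/-!
The Lyapunov function is `V(t,x,y) = ∫₀ᵀ ‖Dφ(t+s;t,x)y‖ᵖ ds`. Incremental stability makes
`φ(τ;t,·)` Lipschitz with constant `K e^{-λ(τ-t)}`, which bounds `‖Dφ(τ;t,x)‖` from above;
running Grönwall's inequality backwards along `ẏ = D_x f(x,t) y` with `‖D_x f‖ ≤ L` bounds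
`‖Dφ(τ;t,x)y‖` from below by `e^{-L(τ-t)}‖y‖`. Along the lifted flow the cocycle identity turns
`V` into the sliding-window integral `∫ₜ^{t+T} ‖Dφ(τ;t₀,x₀)y₀‖ᵖ dτ`, whose derivative is
`‖Dφ(t₀+T;t₀,x₀)y₀‖ᵖ - ‖y₀‖ᵖ`; the window `T` is chosen so that `Kᵖe^{-λpT} = 1/2`.
-/

noncomputable section

/-- `φ` is a flow for `f`: `φ t₀ t₀ x = x` and `t ↦ φ t t₀ x` solves `ẋ = f(x,t)`. -/
def IsFlow {n : ℕ} (f : E n → ℝ → E n) (φ : ℝ → ℝ → E n → E n) : Prop :=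
  ∀ t₀ x, IsSolution f t₀ x (fun t => φ t t₀ x)

/-- `φ` is differentiable in the initial state with derivative `Dφ`, and the directional
curves `t ↦ Dφ t t₀ x v` are lifted solutions of the complete lift of `f`. -/
def FlowDiffInitial {n : ℕ} (f : E n → ℝ → E n) (φ : ℝ → ℝ → E n → E n)
    (Dφ : ℝ → ℝ → E n → (E n →L[ℝ] E n)) : Prop :=
  (∀ t t₀ x, t₀ ≤ t → HasFDerivAt (fun z => φ t t₀ z) (Dφ t t₀ x) x) ∧
  ∀ t₀ x v, IsLiftedSolution f t₀ x v (fun t => φ t t₀ x) (fun t => Dφ t t₀ x v)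

open Set Real Filter

theorem exp_neg_mul_norm_le_norm_of_norm_deriv_le {F : Type*} [NormedAddCommGroup F]
    [NormedSpace ℝ F] {y y' : ℝ → F} {L a b : ℝ} (hab : a ≤ b)
    (hy : ∀ τ ∈ Icc a b, HasDerivAt y (y' τ) τ) (bound : ∀ τ ∈ Icc a b, ‖y' τ‖ ≤ L * ‖y τ‖) :
    exp (-(L * (b - a))) * ‖y a‖ ≤ ‖y b‖ := by
  have reflect_mem : ∀ s ∈ Icc a b, a + b - s ∈ Icc a b := fun s hs =>
    ⟨by linarith [hs.2], by linarith [hs.1]⟩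
  have hrev : ∀ s ∈ Icc a b, HasDerivAt (fun s => y (a + b - s)) (-y' (a + b - s)) s :=
    fun s hs => by
      simpa [Function.comp_def] using
        (hy _ (reflect_mem s hs)).scomp s ((hasDerivAt_id s).const_sub (a + b))
  have hgronwall := norm_le_gronwallBound_of_norm_deriv_right_le (ε := 0)
    (fun s hs => (hrev s hs).continuousAt.continuousWithinAt)
    (fun s hs => (hrev s (Ico_subset_Icc_self hs)).hasDerivWithinAt) le_rfl
    (fun s hs => by simpa using bound _ (reflect_mem s (Ico_subset_Icc_self hs)))
    b ⟨hab, le_rfl⟩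
  rw [gronwallBound_ε0] at hgronwall
  simp only [add_sub_cancel_right, add_sub_cancel_left] at hgronwall
  rw [exp_neg, inv_mul_le_iff₀ (exp_pos _)]
  linarith

theorem Continuous.hasDerivAt_integral_add_const {F : Type*} [NormedAddCommGroup F]
    [NormedSpace ℝ F] [CompleteSpace F] {h : ℝ → F} (hh : Continuous h) (T t : ℝ) :
    HasDerivAt (fun u => ∫ τ in u..u + T, h τ) (h (t + T) - h t) t := by
  have hsplit : (fun u => ∫ τ in u..u + T, h τ) =
      fun u => (∫ τ in 0..u + T, h τ) - ∫ τ in 0..u, h τ := by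
    ext u
    exact (intervalIntegral.integral_interval_sub_left (hh.intervalIntegrable _ _)
      (hh.intervalIntegrable _ _)).symm
  rw [hsplit]
  exact ((hh.integral_hasStrictDerivAt 0 (t + T)).hasDerivAt.comp_add_const t T).sub
    (hh.integral_hasStrictDerivAt 0 t).hasDerivAt

def IsIncrementallyExpStable {n : ℕ} (φ : ℝ → ℝ → E n → E n) (K lam : ℝ) : Prop :=
  ∀ (t₀ t : ℝ) (x₁ x₂ : E n), t₀ ≤ t →
    ‖φ t t₀ x₁ - φ t t₀ x₂‖ ≤ K * exp (-lam * (t - t₀)) * ‖x₁ - x₂‖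

section Flow

variable {n : ℕ} {f : E n → ℝ → E n} {φ : ℝ → ℝ → E n → E n}
  {Dφ : ℝ → ℝ → E n → (E n →L[ℝ] E n)}

theorem norm_flowDeriv_apply_le {K lam : ℝ} (hK : 0 ≤ K)
    (hD : ∀ t t₀ x, t₀ ≤ t → HasFDerivAt (fun z => φ t t₀ z) (Dφ t t₀ x) x)
    (hUGIES : IsIncrementallyExpStable φ K lam)
    {t τ : ℝ} (x y : E n) (h : t ≤ τ) :
    ‖Dφ τ t x y‖ ≤ K * exp (-lam * (τ - t)) * ‖y‖ :=
  (Dφ τ t x).le_of_opNorm_le ((hD τ t x h).le_of_lip' (by positivity)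
    (Eventually.of_forall fun z => hUGIES t τ z x h)) y

theorem exp_neg_mul_norm_le_norm_flowDeriv_apply {L : ℝ} (hL : 0 ≤ L)
    (hfLip : ∀ (t : ℝ) (p q : E n), ‖f p t - f q t‖ ≤ L * ‖p - q‖)
    (hDφ : FlowDiffInitial f φ Dφ) {t τ : ℝ} (x y : E n) (h : t ≤ τ) :
    exp (-(L * (τ - t))) * ‖y‖ ≤ ‖Dφ τ t x y‖ := by
  obtain ⟨-, hy₀, hy⟩ := hDφ.2 t x y
  have hjac : ∀ s z, ‖fderiv ℝ (fun w => f w s) z‖ ≤ L := fun s z =>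
    norm_fderiv_le_of_lip' ℝ hL (Eventually.of_forall fun w => hfLip s w z)
  simpa [hy₀] using exp_neg_mul_norm_le_norm_of_norm_deriv_le h (fun s hs => hy s hs.1)
    fun s _ => (fderiv ℝ (fun w => f w s) _).le_of_opNorm_le (hjac s _) _

theorem rpow_norm_flowDeriv_apply_le {K lam p T : ℝ} (hK : 0 ≤ K)
    (hD : ∀ t t₀ x, t₀ ≤ t → HasFDerivAt (fun z => φ t t₀ z) (Dφ t t₀ x) x)
    (hUGIES : IsIncrementallyExpStable φ K lam)
    (hp : 0 ≤ p) (hT : 0 ≤ T) (t : ℝ) (x y : E n) :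
    ‖Dφ (t + T) t x y‖ ^ p ≤ (K * exp (-lam * T)) ^ p * ‖y‖ ^ p := by
  rw [← mul_rpow (by positivity) (norm_nonneg _)]
  refine rpow_le_rpow (norm_nonneg _) ?_ hp
  simpa using norm_flowDeriv_apply_le hK hD hUGIES x y (le_add_of_nonneg_right hT)

def flowLyapunov (Dφ : ℝ → ℝ → E n → (E n →L[ℝ] E n)) (p T t : ℝ) (x y : E n) : ℝ :=
  ∫ s in 0..T, ‖Dφ (t + s) t x y‖ ^ p

theorem continuous_flowLyapunov_integrand {p : ℝ}
    (hcont : ∀ (t : ℝ) (x y : E n), Continuous fun τ => ‖Dφ τ t x y‖) (hp : 0 ≤ p)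
    (t : ℝ) (x y : E n) : Continuous fun s => ‖Dφ (t + s) t x y‖ ^ p :=
  ((hcont t x y).comp (continuous_const_add t)).rpow_const fun _ => Or.inr hp

theorem le_flowLyapunov {L p T : ℝ} (hL : 0 ≤ L)
    (hfLip : ∀ (t : ℝ) (p q : E n), ‖f p t - f q t‖ ≤ L * ‖p - q‖)
    (hDφ : FlowDiffInitial f φ Dφ)
    (hcont : ∀ (t : ℝ) (x y : E n), Continuous fun τ => ‖Dφ τ t x y‖)
    (hp : 0 ≤ p) (hT : 0 ≤ T) (t : ℝ) (x y : E n) :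
    T * exp (-(L * T)) ^ p * ‖y‖ ^ p ≤ flowLyapunov Dφ p T t x y := by
  calc T * exp (-(L * T)) ^ p * ‖y‖ ^ p = ∫ _ in 0..T, (exp (-(L * T)) * ‖y‖) ^ p := by
        rw [intervalIntegral.integral_const, mul_rpow (exp_pos _).le (norm_nonneg _)]
        simp [mul_assoc]
    _ ≤ _ := by
      refine intervalIntegral.integral_mono_on hT intervalIntegrable_const
        ((continuous_flowLyapunov_integrand hcont hp t x y).intervalIntegrable 0 T) fun s hs => ?_
      refine rpow_le_rpow (by positivity) ?_ hp
      calc exp (-(L * T)) * ‖y‖ ≤ exp (-(L * (t + s - t))) * ‖y‖ := by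
            gcongr
            linarith [hs.2]
        _ ≤ _ := exp_neg_mul_norm_le_norm_flowDeriv_apply hL hfLip hDφ x y (by linarith [hs.1])

theorem flowLyapunov_le {K lam p T : ℝ} (hK : 0 ≤ K) (hlam : 0 ≤ lam)
    (hD : ∀ t t₀ x, t₀ ≤ t → HasFDerivAt (fun z => φ t t₀ z) (Dφ t t₀ x) x)
    (hUGIES : IsIncrementallyExpStable φ K lam)
    (hcont : ∀ (t : ℝ) (x y : E n), Continuous fun τ => ‖Dφ τ t x y‖)
    (hp : 0 ≤ p) (hT : 0 ≤ T) (t : ℝ) (x y : E n) :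
    flowLyapunov Dφ p T t x y ≤ T * K ^ p * ‖y‖ ^ p := by
  calc flowLyapunov Dφ p T t x y ≤ ∫ _ in 0..T, (K * ‖y‖) ^ p := by
        refine intervalIntegral.integral_mono_on hT
          ((continuous_flowLyapunov_integrand hcont hp t x y).intervalIntegrable 0 T)
          intervalIntegrable_const fun s hs => ?_
        refine rpow_le_rpow (norm_nonneg _) ?_ hp
        calc ‖Dφ (t + s) t x y‖ ≤ K * exp (-lam * (t + s - t)) * ‖y‖ :=
              norm_flowDeriv_apply_le hK hD hUGIES x y (by linarith [hs.1])
          _ ≤ K * 1 * ‖y‖ := by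
            gcongr
            exact exp_le_one_iff.2 (by nlinarith [hs.1])
          _ = K * ‖y‖ := by ring
    _ = T * K ^ p * ‖y‖ ^ p := by
        rw [intervalIntegral.integral_const, mul_rpow hK (norm_nonneg _)]
        simp [mul_assoc]

theorem flowLyapunov_along_flow {p T : ℝ}
    (hcocycle : ∀ (t s τ : ℝ) (x : E n), t ≤ s → s ≤ τ →
      (Dφ τ s (φ s t x)).comp (Dφ s t x) = Dφ τ t x)
    (hT : 0 ≤ T) {t₀ t : ℝ} (ht : t₀ ≤ t) (x₀ y₀ : E n) :
    flowLyapunov Dφ p T t (φ t t₀ x₀) (Dφ t t₀ x₀ y₀) = ∫ τ in t..t + T, ‖Dφ τ t₀ x₀ y₀‖ ^ p := by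
  calc flowLyapunov Dφ p T t (φ t t₀ x₀) (Dφ t t₀ x₀ y₀)
      = ∫ s in 0..T, ‖Dφ (t + s) t₀ x₀ y₀‖ ^ p := by
        refine intervalIntegral.integral_congr fun s hs => ?_
        rw [uIcc_of_le hT] at hs
        simp only [← hcocycle t₀ t (t + s) x₀ ht (by linarith [hs.1]),
          ContinuousLinearMap.comp_apply]
    _ = _ := by
        simpa using intervalIntegral.integral_comp_add_left (a := 0) (b := T)
          (fun τ => ‖Dφ τ t₀ x₀ y₀‖ ^ p) t

theorem hasDerivWithinAt_flowLyapunov_along_flow {p T : ℝ}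
    (hcocycle : ∀ (t s τ : ℝ) (x : E n), t ≤ s → s ≤ τ →
      (Dφ τ s (φ s t x)).comp (Dφ s t x) = Dφ τ t x)
    (hcont : ∀ (t : ℝ) (x y : E n), Continuous fun τ => ‖Dφ τ t x y‖)
    (hp : 0 ≤ p) (hT : 0 ≤ T) (t₀ : ℝ) (x₀ y₀ : E n) :
    HasDerivWithinAt (fun t => flowLyapunov Dφ p T t (φ t t₀ x₀) (Dφ t t₀ x₀ y₀))
      (‖Dφ (t₀ + T) t₀ x₀ y₀‖ ^ p - ‖Dφ t₀ t₀ x₀ y₀‖ ^ p) (Ici t₀) t₀ :=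
  (((hcont t₀ x₀ y₀).rpow_const fun _ => Or.inr hp).hasDerivAt_integral_add_const T t₀
    ).hasDerivWithinAt.congr (fun _ ht => flowLyapunov_along_flow hcocycle hT ht x₀ y₀)
    (flowLyapunov_along_flow hcocycle hT le_rfl x₀ y₀)

end Flow

theorem exists_pos_rpow_mul_exp_neg_mul_eq_half {K lam p : ℝ} (hK : 1 ≤ K) (hlam : 0 < lam)
    (hp : 0 < p) : ∃ T > 0, (K * exp (-lam * T)) ^ p = 1 / 2 := by
  have hKp : 1 ≤ K ^ p := one_le_rpow hK hp.le
  refine ⟨log (2 * K ^ p) / (lam * p), div_pos (log_pos (by linarith)) (by positivity), ?_⟩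
  rw [mul_rpow (by linarith) (exp_pos _).le, ← exp_mul,
    show -lam * (log (2 * K ^ p) / (lam * p)) * p = -log (2 * K ^ p) by field_simp,
    exp_neg, exp_log (by positivity)]
  field_simp

theorem converse_ugies_general {n : ℕ} (f : E n → ℝ → E n)
    (L : ℝ) (hL : 0 < L)
    (hfLip : ∀ (t : ℝ) (p q : E n), ‖f p t - f q t‖ ≤ L * ‖p - q‖)
    (φ : ℝ → ℝ → E n → E n) (Dφ : ℝ → ℝ → E n → (E n →L[ℝ] E n))
    (hDφ : FlowDiffInitial f φ Dφ)
    (hcocycle : ∀ (t s τ : ℝ) (x : E n), t ≤ s → s ≤ τ →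
      (Dφ τ s (φ s t x)).comp (Dφ s t x) = Dφ τ t x)
    (hcont : ∀ (t : ℝ) (x y : E n), Continuous fun τ => ‖Dφ τ t x y‖)
    (K lam : ℝ) (hK : 1 ≤ K) (hlam : 0 < lam)
    (hUGIES : ∀ (t₀ t : ℝ) (x₁ x₂ : E n), t₀ ≤ t →
      ‖φ t t₀ x₁ - φ t t₀ x₂‖ ≤ K * Real.exp (-lam * (t - t₀)) * ‖x₁ - x₂‖) :
    ∀ p : ℝ, 1 ≤ p →
      ∃ (c₁ c₂ k : ℝ) (V : ℝ → E n → E n → ℝ),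
        0 < c₁ ∧ 0 < c₂ ∧ 0 < k ∧
        (∀ (t : ℝ) (x y : E n), c₁ * ‖y‖ ^ p ≤ V t x y ∧ V t x y ≤ c₂ * ‖y‖ ^ p) ∧
        (∀ (t₀ : ℝ) (x₀ y₀ : E n), ∃ d : ℝ,
          HasDerivWithinAt (fun t => V t (φ t t₀ x₀) (Dφ t t₀ x₀ y₀)) d
            (Set.Ici t₀) t₀ ∧
          d ≤ -k * V t₀ x₀ y₀) := by
  intro p hp
  have hp0 : 0 < p := by linarith
  have hK0 : 0 ≤ K := by linarith
  obtain ⟨T, hT, hdecay⟩ := exists_pos_rpow_mul_exp_neg_mul_eq_half hK hlam hp0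
  have hc₂ : 0 < T * K ^ p := by positivity
  have hV_le := flowLyapunov_le hK0 hlam.le hDφ.1 hUGIES hcont hp0.le hT.le
  refine ⟨T * exp (-(L * T)) ^ p, T * K ^ p, 1 / (2 * (T * K ^ p)), flowLyapunov Dφ p T,
    by positivity, hc₂, by positivity,
    fun t x y => ⟨le_flowLyapunov hL.le hfLip hDφ hcont hp0.le hT.le t x y, hV_le t x y⟩,
    fun t₀ x₀ y₀ => ⟨_, hasDerivWithinAt_flowLyapunov_along_flow hcocycle hcont hp0.le hT.le
      t₀ x₀ y₀, ?_⟩⟩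
  have hhalf : ‖Dφ (t₀ + T) t₀ x₀ y₀‖ ^ p ≤ ‖y₀‖ ^ p / 2 := by
    have := rpow_norm_flowDeriv_apply_le hK0 hDφ.1 hUGIES hp0.le hT.le t₀ x₀ y₀
    rwa [hdecay, one_div_mul_eq_div] at this
  have hkV : 1 / (2 * (T * K ^ p)) * flowLyapunov Dφ p T t₀ x₀ y₀ ≤ ‖y₀‖ ^ p / 2 := by
    rw [one_div_mul_eq_div, div_le_iff₀ (by positivity)]
    linarith [hV_le t₀ x₀ y₀]
  have hinit : Dφ t₀ t₀ x₀ y₀ = y₀ := (hDφ.2 t₀ x₀ y₀).2.1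
  rw [hinit, neg_mul]
  linarith

/-- Converse theorem for uniform global incremental exponential stability: if the system
is UGIES, then for every `p ≥ 1` there is a Finsler–Lyapunov function `V` with
`c₁‖y‖^p ≤ V(t,x,y) ≤ c₂‖y‖^p` whose right derivative along the lifted flow
`t ↦ (φ(t;t₀,x₀), Dφ(t;t₀,x₀) y₀)` at `t = t₀` is at most `−k V(t₀,x₀,y₀)`. -/
theorem converse_ugies {n : ℕ} (f : E n → ℝ → E n)
    (hf : ∀ t, ContDiff ℝ 1 (fun z => f z t))
    (L : ℝ) (hL : 0 < L)
    (hfLip : ∀ (t : ℝ) (p q : E n), ‖f p t - f q t‖ ≤ L * ‖p - q‖)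
    (φ : ℝ → ℝ → E n → E n) (Dφ : ℝ → ℝ → E n → (E n →L[ℝ] E n))
    (hφ : IsFlow f φ) (hDφ : FlowDiffInitial f φ Dφ)
    (hcocycle : ∀ (t s τ : ℝ) (x : E n), t ≤ s → s ≤ τ →
      (Dφ τ s (φ s t x)).comp (Dφ s t x) = Dφ τ t x)
    (hcont : ∀ (t : ℝ) (x y : E n), Continuous fun τ => ‖Dφ τ t x y‖)
    (K lam : ℝ) (hK : 1 ≤ K) (hlam : 0 < lam)
    (hUGIES : ∀ (t₀ t : ℝ) (x₁ x₂ : E n), t₀ ≤ t →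
      ‖φ t t₀ x₁ - φ t t₀ x₂‖ ≤ K * Real.exp (-lam * (t - t₀)) * ‖x₁ - x₂‖) :
    ∀ p : ℝ, 1 ≤ p →
      ∃ (c₁ c₂ k : ℝ) (V : ℝ → E n → E n → ℝ),
        0 < c₁ ∧ 0 < c₂ ∧ 0 < k ∧
        (∀ (t : ℝ) (x y : E n), c₁ * ‖y‖ ^ p ≤ V t x y ∧ V t x y ≤ c₂ * ‖y‖ ^ p) ∧
        (∀ (t₀ : ℝ) (x₀ y₀ : E n), ∃ d : ℝ,
          HasDerivWithinAt (fun t => V t (φ t t₀ x₀) (Dφ t t₀ x₀ y₀)) d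
            (Set.Ici t₀) t₀ ∧
          d ≤ -k * V t₀ x₀ y₀) :=
  converse_ugies_general f L hL hfLip φ Dφ hDφ hcocycle hcont K lam hK hlam hUGIES
end
end
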